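/- Let f : ℝ → ℝ be continuous and let u be a solution of the radial equation on an interval J ⊆ (0,∞). If r₁ ∈ J satisfies I(r₁) < 0, then u(r) ≠ 0 for every r ∈ J with r ≥ r₁. -/

import Mathlib

/-
The energy `I(r) = |u'|^m / m' + F(u)` is nonincreasing along a solution on `J ⊆ (0, ∞)`: writing
`w = φ_m(u')`, one has `|u'|^m / m' = |w|^{m'} / m'` and `φ_{m'}(w) = u'`, so the equation gives
`I' = u' w' + f(u) u' = -((N - 1) / r) u' φ_m(u') ≤ 0`. At a zero `r ≥ r₁` of `u` the energy is
`|u'(r)|^m / m' ≥ 0 > I(r₁)`, which is impossible.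
-/

open Set Filter MeasureTheory

noncomputable def phim (m x : ℝ) : ℝ := |x| ^ (m - 2) * x

noncomputable def Fint (f : ℝ → ℝ) (s : ℝ) : ℝ := ∫ t in (0:ℝ)..s, f t

noncomputable def Qfun (N m : ℝ) (f : ℝ → ℝ) (s : ℝ) : ℝ :=
  m * N * Fint f s - (N - m) * s * f s

/-- `u` (with derivative function `u'`) is a solution of the radial quasilinear
equation on the set `J`. -/
def IsSolutionOn (N m : ℝ) (f : ℝ → ℝ) (J : Set ℝ) (u u' : ℝ → ℝ) : Prop :=
  (∀ r ∈ J, HasDerivWithinAt u (u' r) J r) ∧ ContinuousOn u' J ∧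
    ∃ w' : ℝ → ℝ,
      (∀ r ∈ J ∩ Set.Ioi (0:ℝ),
        HasDerivWithinAt (fun t => phim m (u' t)) (w' r) (J ∩ Set.Ioi (0:ℝ)) r) ∧
      ContinuousOn w' (J ∩ Set.Ioi (0:ℝ)) ∧
      ∀ r ∈ J ∩ Set.Ioi (0:ℝ), w' r + ((N - 1) / r) * phim m (u' r) + f (u r) = 0

def IsIVPSolutionOn (N m : ℝ) (f : ℝ → ℝ) (α : ℝ) (J : Set ℝ) (u u' : ℝ → ℝ) : Prop :=
  IsSolutionOn N m f J u u' ∧ u 0 = α ∧ u' 0 = 0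

/-- Admissible domains for the IVP: `[0,∞)` or `[0,R)` with `0 < R`. -/
def IVPDomain (J : Set ℝ) : Prop :=
  J = Set.Ici (0:ℝ) ∨ ∃ R : ℝ, 0 < R ∧ J = Set.Ico (0:ℝ) R

/-- The solution `u` of the IVP on `J` cannot be extended to a solution on a
strictly larger admissible domain. -/
def Noncontinuable (N m : ℝ) (f : ℝ → ℝ) (α : ℝ) (J : Set ℝ) (u u' : ℝ → ℝ) : Prop :=
  ∀ J' : Set ℝ, IVPDomain J' → J ⊂ J' →
    ¬ ∃ v v' : ℝ → ℝ, IsIVPSolutionOn N m f α J' v v' ∧ Set.EqOn v u J ∧ Set.EqOn v' u' J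

open Classical in
/-- The filter describing the approach to the right endpoint of an IVP domain. -/
noncomputable def domEnd (J : Set ℝ) : Filter ℝ :=
  if J = Set.Ici (0:ℝ) then Filter.atTop else nhdsWithin (sSup J) (Set.Iio (sSup J))

def LocLipschitzOn (f : ℝ → ℝ) (S : Set ℝ) : Prop :=
  ∀ x ∈ S, ∃ ε : ℝ, 0 < ε ∧ ∃ K : NNReal, LipschitzOnWith K f (Metric.ball x ε ∩ S)

/-- Assumption (f₂). -/
structure Hf2 (f : ℝ → ℝ) (βm βp : ℝ) (γm γp : EReal) : Prop where
  hβm : βm < 0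
  hβp : 0 < βp
  hFneg : ∀ s : ℝ, s ∈ Set.Ioo βm βp → s ≠ 0 → Fint f s < 0
  hFβm : Fint f βm = 0
  hFβp : Fint f βp = 0
  hγp : (βp : EReal) < γp
  hγm : γm < (βm : EReal)
  hfpos : ∀ s : ℝ, βp < s → (s : EReal) < γp → 0 < f s
  hfneg : ∀ s : ℝ, γm < (s : EReal) → s < βm → f s < 0
  hγpzero : ∀ s : ℝ, (s : EReal) = γp → f s = 0
  hγmzero : ∀ s : ℝ, (s : EReal) = γm → f s = 0
  hlim : ∃ L : EReal,
    Filter.Tendsto (fun s : ℝ => (Fint f s : EReal))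
      (Filter.comap Real.toEReal (nhdsWithin γp (Set.Iio γp))) (nhds L) ∧
    Filter.Tendsto (fun s : ℝ => (Fint f s : EReal))
      (Filter.comap Real.toEReal (nhdsWithin γm (Set.Ioi γm))) (nhds L)
  hlip : LocLipschitzOn f {s : ℝ | (γm < (s : EReal) ∧ s < 0) ∨ (0 < s ∧ (s : EReal) < γp)}

/-- Assumption (f₃). -/
def Hf3 (N m : ℝ) (f : ℝ → ℝ) (βm βp : ℝ) (γm γp : EReal) : Prop :=
  (γp = ⊤ →
    (∃ βb : ℝ, βp < βb ∧ ∀ s : ℝ, βb ≤ s → 0 ≤ Qfun N m f s) ∧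
    (∃ θ : ℝ, θ ∈ Set.Ioo (0:ℝ) 1 ∧
      Filter.Tendsto (fun s : ℝ =>
        sInf ((fun p : ℝ × ℝ =>
          Qfun N m f p.2 * ((|s| ^ (m - 2) * s) / f p.1) ^ (N / m)) ''
            (Set.Icc (θ * s) s ×ˢ Set.Icc (θ * s) s)))
        Filter.atTop Filter.atTop)) ∧
  (γm = ⊥ →
    (∃ βb : ℝ, -βb < βm ∧ ∀ s : ℝ, s ≤ -βb → 0 ≤ Qfun N m f s) ∧
    (∃ θ : ℝ, θ ∈ Set.Ioo (0:ℝ) 1 ∧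
      Filter.Tendsto (fun s : ℝ =>
        sInf ((fun p : ℝ × ℝ =>
          Qfun N m f p.2 * ((|s| ^ (m - 2) * s) / f p.1) ^ (N / m)) ''
            (Set.Icc s (θ * s) ×ˢ Set.Icc s (θ * s))))
        Filter.atBot Filter.atTop))

/-- Assumption (f₄). -/
def Hf4 (N m : ℝ) (f : ℝ → ℝ) (βm βp : ℝ) (γm γp : EReal) : Prop :=
  (γp ≠ ⊤ → ∃ L₀ : ℝ, 0 < L₀ ∧ ∃ βb : ℝ, βp < βb ∧
    ∀ s : ℝ, βb ≤ s → (s : EReal) < γp → f s ≤ L₀ * (γp.toReal - s) ^ (m - 1)) ∧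
  (γm ≠ ⊥ → ∃ L₀ : ℝ, 0 < L₀ ∧ ∃ βb : ℝ, -βm < βb ∧
    ∀ s : ℝ, γm < (s : EReal) → s ≤ -βb → -f s ≤ L₀ * (s - γm.toReal) ^ (m - 1))

open Real Topology

lemma mul_phim_self_nonneg (m x : ℝ) : 0 ≤ x * phim m x := by
  rw [phim, mul_left_comm]
  exact mul_nonneg (rpow_nonneg (abs_nonneg x) _) (mul_self_nonneg x)

section Phim

variable {m q : ℝ}

lemma abs_phim (hm : 1 < m) (x : ℝ) : |phim m x| = |x| ^ (m - 1) := by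
  rcases eq_or_ne x 0 with rfl | hx
  · simp [phim, zero_rpow (by linarith : m - 1 ≠ 0)]
  · rw [phim, abs_mul, abs_of_nonneg (rpow_nonneg (abs_nonneg x) _),
      ← rpow_add_one (abs_pos.mpr hx).ne']
    ring_nf

lemma abs_phim_rpow (h : m.HolderConjugate q) (x : ℝ) : |phim m x| ^ q = |x| ^ m := by
  rw [abs_phim h.lt, ← rpow_mul (abs_nonneg x), h.sub_one_mul_conj]

lemma phim_phim (h : m.HolderConjugate q) (x : ℝ) : phim q (phim m x) = x := by
  rcases eq_or_ne x 0 with rfl | hx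
  · simp [phim]
  · have hexp : (m - 1) * (q - 2) + (m - 2) = 0 := by linarith [h.sub_one_mul_conj]
    rw [phim, abs_phim h.lt, ← rpow_mul (abs_nonneg x), phim, ← mul_assoc,
      ← rpow_add (abs_pos.mpr hx), hexp, rpow_zero, one_mul]

lemma hasDerivAt_abs_rpow_div (hq : 1 < q) (x : ℝ) :
    HasDerivAt (fun s => |s| ^ q / q) (phim q x) x := by
  have := (hasDerivAt_abs_rpow x hq).div_const q
  rwa [mul_assoc, mul_div_cancel_left₀ _ (by linarith : q ≠ 0)] at this

end Phim

lemma hasDerivAt_Fint {f : ℝ → ℝ} (hf : Continuous f) (s : ℝ) : HasDerivAt (Fint f) (f s) s :=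
  intervalIntegral.integral_hasDerivAt_right (hf.intervalIntegrable 0 s)
    hf.stronglyMeasurable.stronglyMeasurableAtFilter hf.continuousAt

noncomputable def radialEnergy (m : ℝ) (f u u' : ℝ → ℝ) (r : ℝ) : ℝ :=
  |u' r| ^ m / m.conjExponent + Fint f (u r)

lemma radialEnergy_nonneg_of_eq_zero {m : ℝ} (hm : 1 < m) {f u u' : ℝ → ℝ} {r : ℝ}
    (hur : u r = 0) : 0 ≤ radialEnergy m f u u' r := by
  have : 0 < m.conjExponent := (HolderConjugate.conjExponent hm).symm.pos
  rw [radialEnergy, hur, Fint, intervalIntegral.integral_same, add_zero]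
  positivity

namespace IsSolutionOn

variable {N m : ℝ} {f : ℝ → ℝ} {J : Set ℝ} {u u' : ℝ → ℝ}

lemma hasDerivAt_radialEnergy (hm : 1 < m) (hf : Continuous f) (hJ0 : J ⊆ Ioi 0)
    (hu : IsSolutionOn N m f J u u') {r : ℝ} (hr : r ∈ interior J) :
    HasDerivAt (radialEnergy m f u u') (-((N - 1) / r) * (u' r * phim m (u' r))) r := by
  obtain ⟨hud, -, w', hwd, -, heq⟩ := hu
  have hJJ : J ∩ Ioi 0 = J := inter_eq_left.mpr hJ0
  rw [hJJ] at hwd heq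
  have hconj := HolderConjugate.conjExponent hm
  have hrJ : J ∈ 𝓝 r := mem_interior_iff_mem_nhds.mp hr
  have hrJ' := interior_subset hr
  have hu_r : HasDerivAt u (u' r) r := (hud r hrJ').hasDerivAt hrJ
  have hw_r : HasDerivAt (fun t => phim m (u' t)) (w' r) r := (hwd r hrJ').hasDerivAt hrJ
  have hkin := (hasDerivAt_abs_rpow_div hconj.symm.lt (phim m (u' r))).comp r hw_r
  rw [phim_phim hconj] at hkin
  have hE : radialEnergy m f u u' =
      fun t => |phim m (u' t)| ^ m.conjExponent / m.conjExponent + Fint f (u t) := by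
    funext t
    rw [radialEnergy, abs_phim_rpow hconj]
  rw [hE]
  exact (hkin.add ((hasDerivAt_Fint hf (u r)).comp r hu_r)).congr_deriv
    (by linear_combination u' r * heq r hrJ')

lemma antitoneOn_radialEnergy (hm : 1 < m) (hN : 1 ≤ N) (hf : Continuous f)
    (hJc : J.OrdConnected) (hJ0 : J ⊆ Ioi 0) (hu : IsSolutionOn N m f J u u') :
    AntitoneOn (radialEnergy m f u u') J := by
  have hcont : ContinuousOn (radialEnergy m f u u') J := by
    have hu_c : ContinuousOn u J := fun r hr => (hu.1 r hr).continuousWithinAt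
    have hF_c : Continuous (Fint f) :=
      continuous_iff_continuousAt.2 fun s => (hasDerivAt_Fint hf s).continuousAt
    exact ((hu.2.1.abs.rpow_const fun _ _ => Or.inr (by linarith)).div_const _).add
      (hF_c.comp_continuousOn hu_c)
  refine antitoneOn_of_hasDerivWithinAt_nonpos hJc.convex hcont
    (fun r hr => (hu.hasDerivAt_radialEnergy hm hf hJ0 hr).hasDerivWithinAt) fun r hr => ?_
  have hr0 : 0 < r := hJ0 (interior_subset hr)
  rw [neg_mul, neg_nonpos]
  exact mul_nonneg (div_nonneg (by linarith) hr0.le) (mul_phim_self_nonneg m (u' r))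

end IsSolutionOn

/-- once the energy is negative, the solution can no longer vanish. -/
theorem negative_energy_no_zero
    (N m : ℝ) (hm : 1 < m) (hNm : m ≤ N) (f : ℝ → ℝ) (hf : Continuous f)
    (J : Set ℝ) (hJc : J.OrdConnected) (hJ0 : J ⊆ Set.Ioi (0:ℝ))
    (u u' : ℝ → ℝ) (hu : IsSolutionOn N m f J u u')
    (r₁ : ℝ) (hr₁ : r₁ ∈ J)
    (hI : |u' r₁| ^ m / (m / (m - 1)) + Fint f (u r₁) < 0) :
    ∀ r ∈ J, r₁ ≤ r → u r ≠ 0 := by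
  intro r hr hr₁r hur
  have hdecay := hu.antitoneOn_radialEnergy hm (by linarith) hf hJc hJ0 hr₁ hr hr₁r
  have hnonneg : 0 ≤ radialEnergy m f u u' r := radialEnergy_nonneg_of_eq_zero hm hur
  exact (hI.trans_le hnonneg).not_ge hdecay
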